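/- Full-exploration implies border-completion: if a set of graphs S is closed under forwards maximality (every G ∈ S extends to some G' ∈ S with no forward dangling edges) and backwards maximality (every G ∈ S extends to some G' ∈ S with no backward dangling edges) and under inclusion, then for every G ∈ S there exists G' ∈ S with G an induced subgraph of G' and every vertex of G (including border vertices) internal in G'. -/

import Mathlib

/-- Directions for suffix words. -/
inductive LR | l | r
deriving DecidableEq

/-- Words over {l, r}. -/
abbrev Word := List LR

/-- Raw terms of the name algebra. -/
inductive PreName where
  | nat : ℕ → PreName
  | suff : PreName → Word → PreName
  | join : PreName → PreName → PreName
  | shift : ℤ → PreName → PreName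

/-- The equational theory of the name algebra (congruence closure of the nine rules). -/
inductive NameEq : PreName → PreName → Prop where
  | refl (u) : NameEq u u
  | symm {u v} : NameEq u v → NameEq v u
  | trans {u v w} : NameEq u v → NameEq v w → NameEq u w
  | suff_congr {u v} (p) : NameEq u v → NameEq (.suff u p) (.suff v p)
  | join_congr {u v u' v'} : NameEq u u' → NameEq v v' → NameEq (.join u v) (.join u' v')
  | shift_congr {u v} (t) : NameEq u v → NameEq (.shift t u) (.shift t v)
  | suff_nil (u) : NameEq (.suff u []) u
  | suff_append (u : PreName) (p q : Word) :
      NameEq (.suff u (p ++ q)) (.suff (.suff u p) q)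
  | join_lr (u) : NameEq (.join (.suff u [.l]) (.suff u [.r])) u
  | join_l (u v) : NameEq (.suff (.join u v) [.l]) u
  | join_r (u v) : NameEq (.suff (.join u v) [.r]) v
  | shift_suff (t u p) : NameEq (.shift t (.suff u p)) (.suff (.shift t u) p)
  | shift_join (t u v) : NameEq (.shift t (.join u v)) (.join (.shift t u) (.shift t v))
  | shift_shift (s t u) : NameEq (.shift s (.shift t u)) (.shift (s + t) u)
  | shift_zero (u) : NameEq (.shift 0 u) u

instance preNameSetoid : Setoid PreName :=
  ⟨NameEq, ⟨NameEq.refl, NameEq.symm, NameEq.trans⟩⟩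

/-- The name algebra: raw terms modulo the equational theory. -/
def Name := Quotient preNameSetoid

def Name.mk (u : PreName) : Name := Quotient.mk preNameSetoid u

def Name.suff (u : Name) (p : Word) : Name :=
  Quotient.map (fun v => PreName.suff v p) (fun _ _ h => NameEq.suff_congr p h) u

def Name.join (u v : Name) : Name :=
  Quotient.map₂ PreName.join (fun _ _ h _ _ h' => NameEq.join_congr h h') u v

def Name.shift (t : ℤ) (u : Name) : Name :=
  Quotient.map (PreName.shift t) (fun _ _ h => NameEq.shift_congr t h) u

/-- The position projector on raw terms: strips all time shifts. -/
def spPre : PreName → PreName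
  | .nat m => .nat m
  | .suff u p => .suff (spPre u) p
  | .join u v => .join (spPre u) (spPre v)
  | .shift _ u => spPre u

theorem spPre_congr : ∀ {u v : PreName}, NameEq u v → NameEq (spPre u) (spPre v) := by
  intro u v h
  induction h with
  | refl u => exact NameEq.refl _
  | symm _ ih => exact ih.symm
  | trans _ _ ih₁ ih₂ => exact ih₁.trans ih₂
  | suff_congr p _ ih => exact NameEq.suff_congr p ih
  | join_congr _ _ ih₁ ih₂ => exact NameEq.join_congr ih₁ ih₂
  | shift_congr t _ ih => exact ih
  | suff_nil u => exact NameEq.suff_nil _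
  | suff_append u p q => exact NameEq.suff_append _ p q
  | join_lr u => exact NameEq.join_lr _
  | join_l u v => exact NameEq.join_l _ _
  | join_r u v => exact NameEq.join_r _ _
  | shift_suff t u p => exact NameEq.refl _
  | shift_join t u v => exact NameEq.refl _
  | shift_shift s t u => exact NameEq.refl _
  | shift_zero u => exact NameEq.refl _

/-- The position projector on the name algebra. -/
def Name.sp : Name → Name := Quotient.map spPre (fun _ _ h => spPre_congr h)

/-- The position algebra, as the image of the position projector. -/
def PosSet : Set Name := Set.range Name.sp

/-- Positions. -/
abbrev Pos := {x : Name // x ∈ PosSet}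

def Name.spPos (u : Name) : Pos := ⟨Name.sp u, ⟨u, rfl⟩⟩

/-- Membership in the subalgebra generated by `U` (closed under suffixing, merging, time shift). -/
inductive InClosure (U : Set Name) : Name → Prop
  | base {u} : u ∈ U → InClosure U u
  | suff {u} (p : Word) : InClosure U u → InClosure U (u.suff p)
  | join {u v} : InClosure U u → InClosure U v → InClosure U (u.join v)
  | shift (t : ℤ) {u} : InClosure U u → InClosure U (Name.shift t u)

/-- The closure `⟨U⟩`: smallest subalgebra of the name algebra containing `U`. -/
def Name.closure (U : Set Name) : Set Name := {u | InClosure U u}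

/-- A renaming: a homomorphism of the name algebra whose induced map on positions is
a bijection of the position algebra. -/
structure IsRenaming (R : Name → Name) : Prop where
  map_suff : ∀ u p, R (u.suff p) = (R u).suff p
  map_join : ∀ u v, R (u.join v) = (R u).join (R v)
  map_shift : ∀ t u, R (Name.shift t u) = Name.shift t (R u)
  bijOn : Set.BijOn (Name.sp ∘ R) PosSet PosSet

/-- The action of a renaming on positions, `x ↦ sp (R x)`. -/
def posMap (R : Name → Name) (x : Pos) : Pos := ⟨Name.sp (R x.1), ⟨R x.1, rfl⟩⟩
/-- Directed acyclic labelled port graphs over the name algebra (raw data;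
ports and internal states are encoded as natural numbers). -/
structure PortGraph where
  I : Set Name
  B : Set Name
  E : Set ((Name × ℕ) × (Name × ℕ))
  σ : Set (Name × ℕ)

namespace PortGraph

/-- All vertices of a graph. -/
def V (G : PortGraph) : Set Name := G.I ∪ G.B

/-- Vertexwise action of a renaming on a graph. -/
def rename (R : Name → Name) (G : PortGraph) : PortGraph where
  I := R '' G.I
  B := R '' G.B
  E := (fun e => ((R e.1.1, e.1.2), (R e.2.1, e.2.2))) '' G.E
  σ := (fun s => (R s.1, s.2)) '' G.σ

/-- The induced subgraph `G_U`: internal vertices `I_G ∩ U`, all edges of `G` touching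
them, and border vertices the remaining endpoints of those edges. -/
def induced (G : PortGraph) (U : Set Name) : PortGraph where
  I := G.I ∩ U
  B := {v | v ∉ G.I ∩ U ∧
        ∃ e ∈ G.E, (e.1.1 ∈ G.I ∩ U ∨ e.2.1 ∈ G.I ∩ U) ∧ (v = e.1.1 ∨ v = e.2.1)}
  E := {e ∈ G.E | e.1.1 ∈ G.I ∩ U ∨ e.2.1 ∈ G.I ∩ U}
  σ := {s ∈ G.σ | s.1 ∈ G.I ∩ U}

/-- `H ⊑ G`: `H` is an induced subgraph of `G`. -/
def IsInducedSubgraph (H G : PortGraph) : Prop := H = G.induced H.I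

/-- The union `G ⊔ H` of two (compatible) graphs. -/
def union (G H : PortGraph) : PortGraph where
  I := G.I ∪ H.I
  B := (G.B ∪ H.B) \ (G.I ∪ H.I)
  E := G.E ∪ H.E
  σ := G.σ ∪ H.σ

/-- The transposed graph: all edges reversed. -/
def transpose (G : PortGraph) : PortGraph where
  I := G.I
  B := G.B
  E := Prod.swap '' G.E
  σ := G.σ

/-- Past vertices: internal vertices with no incoming edge. -/
def Past (G : PortGraph) : Set Name := {u ∈ G.I | ∀ e ∈ G.E, e.2.1 ≠ u}

/-- Future vertices: internal vertices with no outgoing edge. -/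
def Fut (G : PortGraph) : Set Name := {u ∈ G.I | ∀ e ∈ G.E, e.1.1 ≠ u}

/-- No forward dangling edges: every edge's target is internal. -/
def forwardMax (G : PortGraph) : Prop := ∀ e ∈ G.E, e.2.1 ∈ G.I

/-- No backward dangling edges: every edge's source is internal. -/
def backwardMax (G : PortGraph) : Prop := ∀ e ∈ G.E, e.1.1 ∈ G.I

/-- One directed step inside the internal vertices of `G`. -/
def step (G : PortGraph) (u v : Name) : Prop :=
  u ∈ G.I ∧ v ∈ G.I ∧ ∃ e ∈ G.E, e.1.1 = u ∧ e.2.1 = v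

/-- The neighbourhood subgraph `G_{M_x}` induced by a set of positions. -/
def nbhd (G : PortGraph) (P : Set Name) : PortGraph := G.induced {v | Name.sp v ∈ P}

/-- The complement subgraph `G_{\overline{M_x}}`. -/
def conbhd (G : PortGraph) (P : Set Name) : PortGraph := G.induced {v ∈ G.I | Name.sp v ∉ P}

/-- Border-touching edges `F_G = E_G ∖ (I_G : π)²`. -/
def Fedges (G : PortGraph) : Set ((Name × ℕ) × (Name × ℕ)) :=
  {e ∈ G.E | ¬(e.1.1 ∈ G.I ∧ e.2.1 ∈ G.I)}

end PortGraph

/-- `C` is a (forward) cone of position `x` within the set of graphs `S`: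
`C ∈ S` and every internal vertex is accessible by a directed path from
the vertex at position `x`. -/
def IsConeAt (S : Set PortGraph) (x : Name) (C : PortGraph) : Prop :=
  C ∈ S ∧ ∃ u ∈ C.I, Name.sp u = x ∧ ∀ v ∈ C.I, Relation.ReflTransGen (PortGraph.step C) u v

/-- Closure properties of a working set of graphs (Def. closure). -/
structure SClosed (S : Set PortGraph) : Prop where
  union_closed : ∀ G ∈ S, ∀ H ∈ S, G.V ∩ H.V = ∅ → G.union H ∈ S
  rename_closed : ∀ R, IsRenaming R → ∀ G ∈ S, G.rename R ∈ S
  max_closed : ∀ G ∈ S, ∃ G' ∈ S, G.IsInducedSubgraph G' ∧ G'.forwardMax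
  bwdMax_closed : ∀ G ∈ S, ∃ G' ∈ S, G.IsInducedSubgraph G' ∧ G'.backwardMax
  incl_closed : ∀ G ∈ S, ∀ U, G.induced U ∈ S

/-- A forward neighbourhood scheme (Def. neighbourhood): a renaming-invariant partial
map from positions and graphs to sets of positions, satisfying completeness, the
cone condition, and strong extensivity. -/
structure NbhdScheme (S : Set PortGraph) where
  dom : Pos → Set PortGraph
  M : Pos → PortGraph → Set Name
  dom_sub : ∀ x, dom x ⊆ S
  renameInv : ∀ R, IsRenaming R → ∀ x, ∀ G ∈ dom x,
      G.rename R ∈ dom (posMap R x) ∧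
      M (posMap R x) (G.rename R) = (Name.sp ∘ R) '' M x G
  complete : ∀ G ∈ S, G.forwardMax → ∀ u ∈ G.Past, G ∈ dom (Name.spPos u)
  cone : ∀ x, ∀ G ∈ dom x,
      M x G ⊆ Name.sp '' G.I ∧ IsConeAt S x.1 (G.nbhd (M x G))
  strongExt : ∀ x, ∀ G ∈ dom x, ∀ H ∈ S, (G.nbhd (M x G)).IsInducedSubgraph H →
      H ∈ dom x ∧ H.nbhd (M x H) = G.nbhd (M x G)

/-- A backwards neighbourhood scheme: as a forward one, but complete w.r.t. futures of
backwards-maximal graphs, with neighbourhoods that are backwards cones. -/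
structure BwdNbhdScheme (S : Set PortGraph) where
  dom : Pos → Set PortGraph
  M : Pos → PortGraph → Set Name
  dom_sub : ∀ x, dom x ⊆ S
  renameInv : ∀ R, IsRenaming R → ∀ x, ∀ G ∈ dom x,
      G.rename R ∈ dom (posMap R x) ∧
      M (posMap R x) (G.rename R) = (Name.sp ∘ R) '' M x G
  complete : ∀ G ∈ S, G.backwardMax → ∀ u ∈ G.Fut, G ∈ dom (Name.spPos u)
  cone : ∀ x, ∀ G ∈ dom x,
      M x G ⊆ Name.sp '' G.I ∧
      IsConeAt (PortGraph.transpose '' S) x.1 ((G.nbhd (M x G)).transpose)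
  strongExt : ∀ x, ∀ G ∈ dom x, ∀ H ∈ S, (G.nbhd (M x G)).IsInducedSubgraph H →
      H ∈ dom x ∧ H.nbhd (M x H) = G.nbhd (M x G)

/-- A local operator for a (forward or backwards) neighbourhood scheme with domain `dom`
and neighbourhood map `M`: renaming-invariant, rewriting only the neighbourhood where
defined, and acting as the identity elsewhere. -/
structure LocalOpOn (S : Set PortGraph) (dom : Pos → Set PortGraph) (M : Pos → PortGraph → Set Name) where
  A : Pos → PortGraph → PortGraph
  renameInv : ∀ R, IsRenaming R → ∀ x, ∀ G ∈ S,
      (A x G).rename R = A (posMap R x) (G.rename R)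
  isLocal : ∀ x, ∀ G ∈ dom x,
      A x G = (A x (G.nbhd (M x G))).union (G.conbhd (M x G))
  id_outside : ∀ x, ∀ G ∈ S, G ∉ dom x → A x G = G

/-- The disks of a neighbourhood scheme at position `x`. -/
def disksOf {S : Set PortGraph} (N : NbhdScheme S) (x : Pos) : Set PortGraph :=
  {D | ∃ G ∈ N.dom x, D = G.nbhd (N.M x G)}

/-- `B` is a local inverse of `A` (left and right local-inverse conditions). -/
def LocalInverse {S : Set PortGraph} (M : NbhdScheme S) (A : LocalOpOn S M.dom M.M)
    (N : BwdNbhdScheme S) (B : LocalOpOn S N.dom N.M) : Prop :=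
  (∀ x, ∀ G ∈ M.dom x, B.A x (A.A x G) = G ∧
      Name.closure (N.M x (A.A x G)) = Name.closure (M.M x G)) ∧
  (∀ x, ∀ H ∈ N.dom x, A.A x (B.A x H) = H ∧
      Name.closure (M.M x (B.A x H)) = Name.closure (N.M x H))

/-- Space-time reversibility of a local operator. -/
def Reversible {S : Set PortGraph} (M : NbhdScheme S) (A : LocalOpOn S M.dom M.M) : Prop :=
  ∃ (N : BwdNbhdScheme S) (B : LocalOpOn S N.dom N.M), LocalInverse M A N B

/-- A mutex set of cones: renaming-invariant, well-indexed, complete and unambiguous. -/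
def IsMutexConeSet (S : Set PortGraph) (D : Pos → Set PortGraph) : Prop :=
  (∀ R, IsRenaming R → ∀ x, D (posMap R x) = PortGraph.rename R '' D x) ∧
  (∀ x, ∀ C ∈ D x, IsConeAt S x.1 C) ∧
  (∀ x y, (D x ∩ D y).Nonempty → x = y) ∧
  (∀ C ∈ S, C.forwardMax → (∃ x : Pos, IsConeAt S x.1 C) →
      ∃ x, ∃ E ∈ D x, E.IsInducedSubgraph C) ∧
  (∀ C ∈ S, (∃ x : Pos, IsConeAt S x.1 C) →
      Set.Subsingleton {E | (∃ x, E ∈ D x) ∧ E.IsInducedSubgraph C})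

/-- A causal rewrite system over `S`, given by a mutex family of left-hand sides and a
rewrite function: renaming-invariant, context-preserving and `S`-preserving. -/
def IsCausalRWS (S : Set PortGraph) (dom : Pos → Set PortGraph) (f : Pos → PortGraph → PortGraph) : Prop :=
  IsMutexConeSet S dom ∧
  (∀ R, IsRenaming R → ∀ x, ∀ D ∈ dom x,
      f (posMap R x) (D.rename R) = (f x D).rename R) ∧
  (∀ x, ∀ D ∈ dom x, (f x D).I ⊆ Name.closure D.I ∧ (f x D).Fedges = D.Fedges) ∧
  (∀ x, ∀ D ∈ dom x, ∀ H, D.union H ∈ S → (f x D).union H ∈ S)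

/-- A backwards causal rewrite system: its transposition is a causal rewrite system over
the transposed set of graphs. -/
def IsBwdCausalRWS (S : Set PortGraph) (dom : Pos → Set PortGraph) (f : Pos → PortGraph → PortGraph) : Prop :=
  IsCausalRWS (PortGraph.transpose '' S) (fun x => PortGraph.transpose '' dom x)
    (fun x C => (f x C.transpose).transpose)

/-- Commutativity of a (forward) local rule on graphs with two past vertices. -/
def CommutesFwd (S : Set PortGraph) (A : Pos → PortGraph → PortGraph) : Prop :=
  ∀ G ∈ S, ∀ u ∈ PortGraph.Past G, ∀ v ∈ PortGraph.Past G, ∀ x y : Pos,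
    x.1 ∈ Name.closure {Name.sp u} → y.1 ∈ Name.closure {Name.sp v} →
    A x (A y G) = A y (A x G)

/-- Commutativity of a backwards local rule on graphs with two future vertices. -/
def CommutesBwd (S : Set PortGraph) (A : Pos → PortGraph → PortGraph) : Prop :=
  ∀ G ∈ S, ∀ u ∈ PortGraph.Fut G, ∀ v ∈ PortGraph.Fut G, ∀ x y : Pos,
    x.1 ∈ Name.closure {Name.sp u} → y.1 ∈ Name.closure {Name.sp v} →
    A x (A y G) = A y (A x G)

/-- A local rule is time-increasing. -/
def TimeIncreasing (dom : Pos → Set PortGraph) (A : Pos → PortGraph → PortGraph) : Prop :=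
  ∀ x : Pos, ∀ G ∈ dom x, ∀ (t t' : ℤ) (y y' : Name),
    Name.sp y = y → Name.sp y' = y' →
    Name.shift t y ∈ G.V → Name.shift t' y' ∈ (A x G).V →
    (Name.closure {y} ∩ Name.closure {y'}).Nonempty →
    t ≤ t' ∧ (x.1 ∈ Name.closure {y} → t < t')

/-- Apply a sequence of positions (rightmost first). -/
def applySeq (A : Pos → PortGraph → PortGraph) : List Pos → PortGraph → PortGraph
  | [], G => G
  | x :: ω, G => A x (applySeq A ω G)

/-- Validity of a sequence of positions in a graph. -/
def ValidSeq (dom : Pos → Set PortGraph) (A : Pos → PortGraph → PortGraph) : List Pos → PortGraph → Prop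
  | [], _ => True
  | x :: ω, G => ValidSeq dom A ω G ∧ applySeq A ω G ∈ dom x

theorem PortGraph.ext' {G H : PortGraph} (hI : G.I = H.I) (hB : G.B = H.B)
    (hE : G.E = H.E) (hσ : G.σ = H.σ) : G = H := by
  cases G; cases H; simp_all

/-- full exploration implies border completion: if `S` is closed under
forwards maximality, backwards maximality and inclusion, then every `G ∈ S` extends to
some `G' ∈ S` in which every vertex of `G` (borders included) is internal. -/
theorem stmt19 (S : Set PortGraph)
    (hmax : ∀ G ∈ S, ∃ G' ∈ S, G.IsInducedSubgraph G' ∧ G'.forwardMax)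
    (hbwd : ∀ G ∈ S, ∃ G' ∈ S, G.IsInducedSubgraph G' ∧ G'.backwardMax)
    (hincl : ∀ G ∈ S, ∀ U, G.induced U ∈ S) :
    ∀ G ∈ S, ∃ G' ∈ S, G.IsInducedSubgraph G' ∧ G.V ⊆ G'.I := by
  intro G hG
  obtain ⟨G₁, hG₁S, h₁, hfm⟩ := hmax G hG
  obtain ⟨G₂, hG₂S, h₂, hbm⟩ := hbwd G₁ hG₁S
  -- component equations from h₁ : G = G₁.induced G.I
  have hI1 : G.I = G₁.I ∩ G.I := by
    conv_lhs => rw [h₁]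
    rfl
  have hB1 : G.B = {v | v ∉ G₁.I ∩ G.I ∧
      ∃ e ∈ G₁.E, (e.1.1 ∈ G₁.I ∩ G.I ∨ e.2.1 ∈ G₁.I ∩ G.I) ∧ (v = e.1.1 ∨ v = e.2.1)} := by
    conv_lhs => rw [h₁]
    rfl
  have hE1 : G.E = {e ∈ G₁.E | e.1.1 ∈ G₁.I ∩ G.I ∨ e.2.1 ∈ G₁.I ∩ G.I} := by
    conv_lhs => rw [h₁]
    rfl
  have hσ1 : G.σ = {s ∈ G₁.σ | s.1 ∈ G₁.I ∩ G.I} := by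
    conv_lhs => rw [h₁]
    rfl
  have hI2 : G₁.I = G₂.I ∩ G₁.I := by
    conv_lhs => rw [h₂]
    rfl
  have hE2 : G₁.E = {e ∈ G₂.E | e.1.1 ∈ G₂.I ∩ G₁.I ∨ e.2.1 ∈ G₂.I ∩ G₁.I} := by
    conv_lhs => rw [h₂]
    rfl
  have hσ2 : G₁.σ = {s ∈ G₂.σ | s.1 ∈ G₂.I ∩ G₁.I} := by
    conv_lhs => rw [h₂]
    rfl
  have sub1 : G.I ⊆ G₁.I := fun v hv => (hI1 ▸ hv : v ∈ G₁.I ∩ G.I).1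
  have sub2 : G₁.I ⊆ G₂.I := fun v hv => (hI2 ▸ hv : v ∈ G₂.I ∩ G₁.I).1
  have subE2 : G₁.E ⊆ G₂.E := fun e he => (hE2 ▸ he : _ ∧ _).1
  -- key: edge conditions relative to G.I agree between G₁ and G₂
  have key : ∀ e, (e ∈ G₂.E ∧ (e.1.1 ∈ G₂.I ∩ G.I ∨ e.2.1 ∈ G₂.I ∩ G.I)) ↔
      (e ∈ G₁.E ∧ (e.1.1 ∈ G₁.I ∩ G.I ∨ e.2.1 ∈ G₁.I ∩ G.I)) := by
    intro e
    constructor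
    · rintro ⟨he, h⟩
      have h' : e.1.1 ∈ G₁.I ∩ G.I ∨ e.2.1 ∈ G₁.I ∩ G.I := by
        rcases h with ⟨_, h⟩ | ⟨_, h⟩
        · exact Or.inl ⟨sub1 h, h⟩
        · exact Or.inr ⟨sub1 h, h⟩
      refine ⟨?_, h'⟩
      rw [hE2]
      refine ⟨he, ?_⟩
      rcases h' with ⟨h, _⟩ | ⟨h, _⟩
      · exact Or.inl ⟨sub2 h, h⟩
      · exact Or.inr ⟨sub2 h, h⟩
    · rintro ⟨he, h⟩
      refine ⟨subE2 he, ?_⟩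
      rcases h with ⟨h, h'⟩ | ⟨h, h'⟩
      · exact Or.inl ⟨sub2 h, h'⟩
      · exact Or.inr ⟨sub2 h, h'⟩
  refine ⟨G₂, hG₂S, ?_, ?_⟩
  · -- transitivity: G = G₂.induced G.I
    refine PortGraph.ext' ?_ ?_ ?_ ?_
    · show G.I = G₂.I ∩ G.I
      exact Set.Subset.antisymm (fun v hv => ⟨sub2 (sub1 hv), hv⟩) (fun v hv => hv.2)
    · show G.B = {v | v ∉ G₂.I ∩ G.I ∧
          ∃ e ∈ G₂.E, (e.1.1 ∈ G₂.I ∩ G.I ∨ e.2.1 ∈ G₂.I ∩ G.I) ∧ (v = e.1.1 ∨ v = e.2.1)}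
      rw [hB1]
      ext v
      simp only [Set.mem_setOf_eq]
      constructor
      · rintro ⟨hv, e, he, h, hv'⟩
        exact ⟨fun hc => hv ⟨sub1 hc.2, hc.2⟩, e, ((key e).2 ⟨he, h⟩).1,
          ((key e).2 ⟨he, h⟩).2, hv'⟩
      · rintro ⟨hv, e, he, h, hv'⟩
        obtain ⟨he', h'⟩ := (key e).1 ⟨he, h⟩
        exact ⟨fun hc => hv ⟨sub2 hc.1, hc.2⟩, e, he', h', hv'⟩
    · show G.E = {e ∈ G₂.E | e.1.1 ∈ G₂.I ∩ G.I ∨ e.2.1 ∈ G₂.I ∩ G.I}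
      rw [hE1]; ext e; exact (key e).symm
    · show G.σ = {s ∈ G₂.σ | s.1 ∈ G₂.I ∩ G.I}
      rw [hσ1, hσ2]
      ext s
      simp only [Set.mem_setOf_eq, Set.mem_inter_iff]
      constructor
      · rintro ⟨⟨hs, h₂s, _⟩, _, hGs⟩
        exact ⟨hs, h₂s, hGs⟩
      · rintro ⟨hs, h₂s, hGs⟩
        exact ⟨⟨hs, h₂s, sub1 hGs⟩, sub1 hGs, hGs⟩
  · -- every vertex of G is internal in G₂
    rintro v (hv | hv)
    · exact sub2 (sub1 hv)
    · rw [hB1] at hv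
      obtain ⟨_, e, he, _, hv'⟩ := hv
      rcases hv' with rfl | rfl
      · exact hbm e (subE2 he)
      · exact sub2 (hfm e he)
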